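/- Fix P ≤ 0. The function (λ, μ) ↦ G(P; λ, μ) is differentiable on (0,∞) × (0,∞) and satisfies the Callan–Symanzik scaling equation μ ∂G/∂μ(P; λ, μ) − 4λ ∂G/∂λ(P; λ, μ) = 0; that is, the propagator at the infrared trivial fixed point is compatible with the beta function β(λ) = 4λ. -/

import Mathlib

open Real

/-- The complete elliptic integral `K(i) = ∫₀^{π/2} dθ/√(1 + sin²θ)`. -/
noncomputable def Kell : ℝ := ∫ θ in (0:ℝ)..(π / 2), 1 / Real.sqrt (1 + Real.sin θ ^ 2)

/-- The residues `Bₙ = (2n+1)(π²/K²)(-1)ⁿ e^{-(n+1/2)π}/(1 + e^{-(2n+1)π})` of the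
exact infrared propagator. -/
noncomputable def B (n : ℕ) : ℝ :=
  (2 * (n : ℝ) + 1) * (π ^ 2 / Kell ^ 2) *
    ((-1 : ℝ) ^ n * Real.exp (-((n : ℝ) + 1 / 2) * π) /
      (1 + Real.exp (-(2 * (n : ℝ) + 1) * π)))

/-- The mass spectrum `mₙ = (n + 1/2)(π/K)(λ/2)^{1/4} μ`. -/
noncomputable def msp (lam μ : ℝ) (n : ℕ) : ℝ :=
  ((n : ℝ) + 1 / 2) * (π / Kell) * (lam / 2) ^ ((1 : ℝ) / 4) * μ

/-- The exact infrared propagator `G(P; λ, μ) = Σₙ Bₙ/(P - mₙ²)`. -/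
noncomputable def Gprop (P lam μ : ℝ) : ℝ := ∑' n : ℕ, B n / (P - msp lam μ n ^ 2)

open Filter Topology

/-! Every mass satisfies `mₙ² = aₙ τ` with `aₙ = massCoeff n` and
`τ = scaleVar λ μ = √(λ/2) μ²`, so `G(P; λ, μ) = F(τ)` for the one-variable series
`F(t) = reducedProp P t = Σ Bₙ / (P - aₙ t)`. For `P ≤ 0` the poles of `F` lie in `t ≤ 0` and
the residues decay geometrically, so `F` can be differentiated termwise on `t > 0`. Since
`μ ∂τ/∂μ = 2τ` and `λ ∂τ/∂λ = τ/2`, the chain rule gives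
`μ ∂G/∂μ - 4λ ∂G/∂λ = (2τ - 4 · τ/2) F'(τ) = 0`. -/

lemma Kell_pos : 0 < Kell := by
  have hcont : Continuous fun θ : ℝ => 1 / √(1 + sin θ ^ 2) :=
    continuous_const.div (by fun_prop) fun θ => by positivity
  exact intervalIntegral.intervalIntegral_pos_of_pos_on (hcont.intervalIntegrable _ _)
    (fun θ _ => by positivity) (by positivity)

lemma abs_B_le (n : ℕ) : |B n| ≤ π ^ 2 / Kell ^ 2 * ((2 * n + 1) * exp (-π) ^ n) := by
  have hdecay : |(-1 : ℝ) ^ n * exp (-((n : ℝ) + 1 / 2) * π) /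
      (1 + exp (-(2 * (n : ℝ) + 1) * π))| ≤ exp (-π) ^ n := by
    rw [abs_div, abs_mul, abs_neg_one_pow, one_mul, abs_of_pos (exp_pos _),
      abs_of_pos (by positivity)]
    calc _ ≤ exp (-((n : ℝ) + 1 / 2) * π) :=
          div_le_self (exp_pos _).le (le_add_of_nonneg_right (exp_pos _).le)
      _ ≤ exp (-π) ^ n := by
          rw [← exp_nat_mul]
          exact exp_le_exp.mpr (by nlinarith [pi_pos])
  rw [B, abs_mul, abs_mul, abs_of_nonneg (by positivity : (0 : ℝ) ≤ 2 * n + 1),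
    abs_of_nonneg (by positivity : (0 : ℝ) ≤ π ^ 2 / Kell ^ 2)]
  calc _ ≤ (2 * n + 1) * (π ^ 2 / Kell ^ 2) * exp (-π) ^ n := by gcongr
    _ = _ := by ring

lemma summable_abs_B : Summable fun n => |B n| := by
  have hr : ‖exp (-π)‖ < 1 := by
    rw [norm_of_nonneg (exp_pos _).le, exp_lt_one_iff]
    linarith [pi_pos]
  have hgeom : Summable fun n : ℕ => (2 * n + 1) * exp (-π) ^ n := by
    simpa [add_mul, mul_assoc] using
      ((summable_pow_mul_geometric_of_norm_lt_one 1 hr).mul_left 2).add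
        (summable_geometric_of_norm_lt_one hr)
  exact .of_nonneg_of_le (fun n => abs_nonneg _) abs_B_le (hgeom.mul_left _)

theorem hasDerivAt_tsum_div_sub_mul {a b : ℕ → ℝ} {c P x : ℝ} (hb : Summable fun n => |b n|)
    (hc : 0 < c) (ha : ∀ n, c ≤ a n) (hP : P ≤ 0) (hx : 0 < x) :
    HasDerivAt (fun y => ∑' n, b n / (P - a n * y)) (∑' n, b n * a n / (P - a n * x) ^ 2) x := by
  have ha_pos n : 0 < a n := hc.trans_le (ha n)
  have hden n {y : ℝ} (hy : 0 < y) : a n * y ≤ |P - a n * y| :=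
    le_abs.mpr (Or.inr (by nlinarith [ha_pos n]))
  have hx2 : x ∈ Set.Ioi (x / 2) := by simp only [Set.mem_Ioi]; linarith
  refine hasDerivAt_tsum_of_isPreconnected (hb.mul_right (1 / (c * (x / 2) ^ 2)))
    (g := fun n y => b n / (P - a n * y)) (g' := fun n y => b n * a n / (P - a n * y) ^ 2)
    isOpen_Ioi isPreconnected_Ioi (fun n y hy => ?_) (fun n y hy => ?_) hx2 ?_ hx2
  · have hy0 : 0 < y := by linarith [Set.mem_Ioi.mp hy]
    have hne : P - a n * y ≠ 0 := abs_pos.mp ((mul_pos (ha_pos n) hy0).trans_le (hden n hy0))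
    have hlin : HasDerivAt (fun y => P - a n * y) (-a n) y := by
      simpa using ((hasDerivAt_id' y).const_mul (a n)).const_sub P
    exact ((hasDerivAt_const y (b n)).fun_div hlin hne).congr_deriv (by ring)
  · have hy0 : 0 < y := by linarith [Set.mem_Ioi.mp hy]
    have hsq : a n * (c * (x / 2) ^ 2) ≤ (P - a n * y) ^ 2 :=
      calc a n * (c * (x / 2) ^ 2) ≤ a n * (a n * y ^ 2) :=
            mul_le_mul_of_nonneg_left (mul_le_mul (ha n)
              (pow_le_pow_left₀ (by positivity) (le_of_lt hy) 2) (by positivity) (ha_pos n).le)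
              (ha_pos n).le
        _ = (a n * y) ^ 2 := by ring
        _ ≤ |P - a n * y| ^ 2 :=
            pow_le_pow_left₀ (mul_pos (ha_pos n) hy0).le (hden n hy0) 2
        _ = (P - a n * y) ^ 2 := sq_abs _
    rw [norm_div, norm_mul, norm_pow, Real.norm_eq_abs, Real.norm_eq_abs, Real.norm_eq_abs,
      sq_abs, abs_of_pos (ha_pos n), mul_div_assoc]
    gcongr |b n| * ?_
    rw [div_le_div_iff₀ ((mul_pos (ha_pos n) (by positivity)).trans_le hsq) (by positivity)]
    linarith
  · refine .of_norm_bounded (hb.mul_right (1 / (c * x))) fun n => ?_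
    rw [norm_div, Real.norm_eq_abs, ← div_eq_mul_one_div]
    gcongr
    exact (mul_le_mul_of_nonneg_right (ha n) hx.le).trans (hden n hx)

noncomputable def massCoeff (n : ℕ) : ℝ := (((n : ℝ) + 1 / 2) * (π / Kell)) ^ 2

lemma massCoeff_zero_pos : 0 < massCoeff 0 := by
  have := Kell_pos
  unfold massCoeff
  positivity

lemma massCoeff_zero_le (n : ℕ) : massCoeff 0 ≤ massCoeff n := by
  have := Kell_pos
  unfold massCoeff
  gcongr
  simp

noncomputable def scaleVar (lam μ : ℝ) : ℝ := √(lam / 2) * μ ^ 2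

noncomputable def reducedProp (P t : ℝ) : ℝ := ∑' n, B n / (P - massCoeff n * t)

lemma msp_sq {lam : ℝ} (hlam : 0 ≤ lam) (μ : ℝ) (n : ℕ) :
    msp lam μ n ^ 2 = massCoeff n * scaleVar lam μ := by
  have hroot : ((lam / 2) ^ ((1 : ℝ) / 4)) ^ 2 = √(lam / 2) := by
    rw [sqrt_eq_rpow, ← rpow_natCast, ← rpow_mul (by positivity)]
    norm_num
  rw [msp, massCoeff, scaleVar, mul_pow, mul_pow, hroot]
  ring

lemma Gprop_eq_reducedProp (P : ℝ) {lam : ℝ} (hlam : 0 ≤ lam) (μ : ℝ) :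
    Gprop P lam μ = reducedProp P (scaleVar lam μ) := by
  simp only [Gprop, reducedProp, msp_sq hlam]

lemma hasDerivAt_reducedProp {P t : ℝ} (hP : P ≤ 0) (ht : 0 < t) :
    HasDerivAt (reducedProp P) (∑' n, B n * massCoeff n / (P - massCoeff n * t) ^ 2) t :=
  hasDerivAt_tsum_div_sub_mul summable_abs_B massCoeff_zero_pos massCoeff_zero_le hP ht

lemma scaleVar_pos {lam μ : ℝ} (hlam : 0 < lam) (hμ : 0 < μ) : 0 < scaleVar lam μ := by
  unfold scaleVar
  positivity

lemma hasDerivAt_scaleVar_left {lam : ℝ} (hlam : 0 < lam) (μ : ℝ) :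
    HasDerivAt (fun l => scaleVar l μ) (scaleVar lam μ / (2 * lam)) lam := by
  refine ((((hasDerivAt_id' lam).div_const 2).sqrt (by positivity)).mul_const (μ ^ 2)).congr_deriv
    ?_
  have hsq : √(lam / 2) ^ 2 = lam / 2 := sq_sqrt (by positivity)
  rw [scaleVar]
  field_simp
  linear_combination -2 * μ ^ 2 * hsq

lemma hasDerivAt_scaleVar_right (lam : ℝ) {μ : ℝ} (hμ : μ ≠ 0) :
    HasDerivAt (fun m => scaleVar lam m) (2 * scaleVar lam μ / μ) μ := by
  refine ((hasDerivAt_pow 2 μ).const_mul (√(lam / 2))).congr_deriv ?_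
  rw [scaleVar, eq_div_iff hμ]
  ring

lemma differentiableOn_scaleVar :
    DifferentiableOn ℝ (fun q : ℝ × ℝ => scaleVar q.1 q.2) (Set.Ioi 0 ×ˢ Set.Ioi 0) := by
  rintro ⟨lam, μ⟩ ⟨hlam, -⟩
  have hne : lam / 2 ≠ 0 := by simp only [Set.mem_Ioi] at hlam; positivity
  have : DifferentiableAt ℝ (fun q : ℝ × ℝ => √(q.1 / 2) * q.2 ^ 2) (lam, μ) := by
    fun_prop (disch := exact hne)
  exact this.differentiableWithinAt

/-- Callan–Symanzik equation at the infrared trivial fixed point: for fixed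
`P ≤ 0`, the map `(λ, μ) ↦ G(P; λ, μ)` is differentiable on `(0,∞) × (0,∞)` and
its partial derivatives satisfy `μ ∂G/∂μ - 4λ ∂G/∂λ = 0`; i.e. the propagator is
compatible with the beta function `β(λ) = 4λ`. -/
theorem callan_symanzik_propagator (P : ℝ) (hP : P ≤ 0) :
    DifferentiableOn ℝ (fun q : ℝ × ℝ => Gprop P q.1 q.2)
      (Set.Ioi (0 : ℝ) ×ˢ Set.Ioi (0 : ℝ)) ∧
    ∀ lam μ : ℝ, 0 < lam → 0 < μ →
      ∃ Gl Gm : ℝ,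
        HasDerivAt (fun l : ℝ => Gprop P l μ) Gl lam ∧
        HasDerivAt (fun m : ℝ => Gprop P lam m) Gm μ ∧
        μ * Gm - 4 * lam * Gl = 0 := by
  refine ⟨?_, fun lam μ hlam hμ => ?_⟩
  · have hF : DifferentiableOn ℝ (reducedProp P) (Set.Ioi 0) := fun t ht =>
      (hasDerivAt_reducedProp hP ht).differentiableAt.differentiableWithinAt
    exact (hF.comp differentiableOn_scaleVar fun q hq => scaleVar_pos hq.1 hq.2).congr
      fun q hq => Gprop_eq_reducedProp P (le_of_lt hq.1) q.2
  · set τ := scaleVar lam μ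
    obtain ⟨F', hF⟩ : ∃ F', HasDerivAt (reducedProp P) F' τ :=
      ⟨_, hasDerivAt_reducedProp hP (scaleVar_pos hlam hμ)⟩
    refine ⟨F' * (τ / (2 * lam)), F' * (2 * τ / μ), ?_, ?_, ?_⟩
    · exact .congr_of_eventuallyEq
        (hF.comp (h₂ := reducedProp P) lam (hasDerivAt_scaleVar_left hlam μ))
        ((eventually_gt_nhds hlam).mono fun l hl => Gprop_eq_reducedProp P hl.le μ)
    · exact .congr_of_eventuallyEq
        (hF.comp (h₂ := reducedProp P) μ (hasDerivAt_scaleVar_right lam hμ.ne'))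
        (.of_forall fun m => Gprop_eq_reducedProp P hlam.le m)
    · field_simp
      ring
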